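/- arXiv:2512.02677 — 2 statements merged into one kernel-verified Lean document; each statement's English description precedes it below -/
import Mathlib

section
/- The rightmost base case in a postfix string is located at a position determined by a suffix-local pattern: in any well-formed postfix expression of positive depth, the first function token f (scanning left to right) that is immediately preceded by arity(f) constant tokens marks the end of a base-case subexpression, and such a token always exists. -/
inductive Expr (C F : Type) (ar : F → ℕ) : Type
  | const : C → Expr C F ar
  | node : (f : F) → (Fin (ar f) → Expr C F ar) → Expr C F ar

variable {C F : Type} {ar : F → ℕ}

/-- Recursion depth. -/
def Expr.depth : Expr C F ar → ℕ
  | .const _ => 0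
  | .node _ ts => 1 + Finset.univ.sup (fun i => (ts i).depth)

/-- Standard recursive evaluation. -/
def Expr.eval (interp : ∀ f, (Fin (ar f) → C) → C) : Expr C F ar → C
  | .const c => c
  | .node f ts => interp f (fun i => (ts i).eval interp)

/-- Postorder flattening of an expression tree into a token sequence over C ⊕ F. -/
def Expr.flatten : Expr C F ar → List (C ⊕ F)
  | .const c => [Sum.inl c]
  | .node f ts => (List.ofFn fun i => (ts i).flatten).flatten ++ [Sum.inr f]

/-- Subexpression relation: e itself, or a subexpression of an immediate argument. -/
inductive Expr.IsSubexpr : Expr C F ar → Expr C F ar → Prop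
  | refl (e : Expr C F ar) : Expr.IsSubexpr e e
  | child {s : Expr C F ar} {f : F} {ts : Fin (ar f) → Expr C F ar} (i : Fin (ar f)) :
      Expr.IsSubexpr s (ts i) → Expr.IsSubexpr s (.node f ts)

/-- A base case: a function symbol applied to constants only. -/
def Expr.IsBase (e : Expr C F ar) : Prop :=
  ∃ (f : F) (cs : Fin (ar f) → C), e = .node f (fun i => .const (cs i))

/-!
In a postfix string every function token ends the flattening of the subtree rooted at it.
If that token is preceded by `arity f` constant tokens, the subtree's children are read
off right to left: the last token of each child's flattening is a constant, so each child is
that constant. Hence the occurrences of the pattern `c₁ … cₖ f` are exactly the flattenings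
of the base subexpressions; one exists once the depth is positive, and the leftmost one is
picked by minimising its end position.
-/

theorem List.exists_mem_of_flatten_eq_append_cons {α : Type*} {L : List (List α)}
    {v w : List α} {x : α} (h : L.flatten = v ++ x :: w) :
    ∃ l ∈ L, ∃ a b, l = a ++ x :: b ∧ a <:+ v := by
  rcases List.flatten_eq_append_iff.1 h with
    ⟨as, bs, rfl, rfl, hbs⟩ | ⟨as, bs, c, cs, ds, rfl, rfl, hc⟩
  · obtain ⟨_, l, _, rfl, -, -⟩ := List.flatten_eq_cons_iff.1 hbs.symm
    exact ⟨_, by simp, [], l, rfl, List.nil_suffix⟩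
  · obtain ⟨rfl, -⟩ := List.cons_eq_cons.1 hc
    exact ⟨_, by simp, bs, cs, rfl, List.suffix_append _ _⟩

theorem List.concat_suffix_concat_iff {α : Type*} {l₁ l₂ : List α} {a b : α} :
    l₁ ++ [a] <:+ l₂ ++ [b] ↔ l₁ <:+ l₂ ∧ a = b := by
  rw [List.suffix_append_inj_of_length_eq (List.length_singleton.trans List.length_singleton.symm)]
  simp

theorem List.flatten_ofFn_singleton {α : Type*} {n : ℕ} (g : Fin n → α) :
    (List.ofFn fun i => [g i]).flatten = List.ofFn g := by
  rw [← List.flatMap_singleton' (List.ofFn g), List.flatMap_def, List.map_ofFn]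
  rfl

namespace Expr

@[simp]
theorem flatten_const (c : C) : (const c : Expr C F ar).flatten = [Sum.inl c] := rfl

theorem flatten_node (f : F) (ts : Fin (ar f) → Expr C F ar) :
    (node f ts).flatten = ((List.ofFn ts).map flatten).flatten ++ [Sum.inr f] := by
  simp [Expr.flatten, List.map_ofFn, Function.comp_def]

@[simp]
theorem flatten_base (f : F) (cs : Fin (ar f) → C) :
    (node f fun i => const (cs i) : Expr C F ar).flatten =
      List.ofFn (fun i => Sum.inl (cs i)) ++ [Sum.inr f] := by
  simp [Expr.flatten, List.flatten_ofFn_singleton]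

theorem depth_eq_zero_iff {e : Expr C F ar} : e.depth = 0 ↔ ∃ c, e = const c := by
  cases e <;> simp [depth]

theorem exists_isBase_isSubexpr {e : Expr C F ar} (he : 1 ≤ e.depth) :
    ∃ b : Expr C F ar, b.IsBase ∧ b.IsSubexpr e := by
  induction e with
  | const c => simp [depth] at he
  | node f ts ih =>
    by_cases hdeep : ∃ i, 1 ≤ (ts i).depth
    · obtain ⟨i, hi⟩ := hdeep
      obtain ⟨b, hb, hsub⟩ := ih i hi
      exact ⟨b, hb, .child i hsub⟩
    · push Not at hdeep
      choose cs hcs using fun i => depth_eq_zero_iff.1 (Nat.lt_one_iff.1 (hdeep i))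
      exact ⟨_, ⟨f, cs, by simp only [← hcs]⟩, .refl _⟩

theorem IsSubexpr.flatten_infix {b e : Expr C F ar} (h : b.IsSubexpr e) :
    b.flatten <:+: e.flatten := by
  induction h with
  | refl => exact List.infix_refl _
  | @child f ts i _ ih =>
    have hmem : (ts i).flatten ∈ List.ofFn fun j => (ts j).flatten := List.mem_ofFn.2 ⟨i, rfl⟩
    exact ih.trans ((List.infix_of_mem_flatten hmem).trans (List.infix_append [] _ _))

theorem exists_isSubexpr_of_flatten_eq {e : Expr C F ar} {v w : List (C ⊕ F)} {g : F}
    (h : e.flatten = v ++ Sum.inr g :: w) :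
    ∃ ts, (node g ts).IsSubexpr e ∧ ((List.ofFn ts).map flatten).flatten <:+ v := by
  induction e generalizing v w with
  | const c => cases v <;> simp_all
  | node f ss ih =>
    rw [flatten_node] at h
    rcases List.eq_nil_or_concat' w with rfl | ⟨w, z, rfl⟩
    · obtain ⟨rfl, hfg⟩ := List.append_inj' h rfl
      cases hfg
      exact ⟨ss, .refl _, List.suffix_refl _⟩
    · obtain ⟨hss, -⟩ := List.append_inj'
        (h.trans (by simp : v ++ Sum.inr g :: (w ++ [z]) = (v ++ Sum.inr g :: w) ++ [z])) rfl
      obtain ⟨l, hl, a, b, rfl, hav⟩ := List.exists_mem_of_flatten_eq_append_cons hss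
      obtain ⟨t, ht, hflat⟩ := List.mem_map.1 hl
      obtain ⟨i, rfl⟩ := List.mem_ofFn.1 ht
      obtain ⟨ts, hsub, hts⟩ := ih i hflat
      exact ⟨ts, .child i hsub, hts.trans hav⟩

theorem eq_map_const_of_flatten_suffix {es : List (Expr C F ar)} {m : List (C ⊕ F)}
    {cs : List C} (hlen : es.length = cs.length)
    (h : (es.map flatten).flatten <:+ m ++ cs.map Sum.inl) :
    es = cs.map const := by
  induction es using List.reverseRecOn generalizing cs with
  | nil => simp_all [eq_comm]
  | append_singleton es t ih =>
    obtain ⟨cs, c, rfl⟩ : ∃ cs' c, cs = cs' ++ [c] := by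
      rcases List.eq_nil_or_concat' cs with rfl | hcs
      · simp at hlen
      · exact hcs
    have hsuffix : (es.map flatten).flatten ++ t.flatten <:+
        (m ++ cs.map Sum.inl) ++ [Sum.inl c] := by simpa using h
    cases t with
    | const c' =>
      rw [flatten_const] at hsuffix
      obtain ⟨hes, hc⟩ := List.concat_suffix_concat_iff.1 hsuffix
      simp [ih (by simpa using hlen) hes, Sum.inl_injective hc]
    | node g ts =>
      rw [flatten_node, ← List.append_assoc] at hsuffix
      exact absurd (List.concat_suffix_concat_iff.1 hsuffix).2 Sum.inr_ne_inl

theorem isSubexpr_base_iff_flatten_infix {e : Expr C F ar} {f : F} {cs : Fin (ar f) → C} :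
    (node f fun i => const (cs i)).IsSubexpr e ↔
      (node f fun i => const (cs i)).flatten <:+: e.flatten := by
  refine ⟨IsSubexpr.flatten_infix, fun ⟨u, w, huw⟩ => ?_⟩
  have hsplit : e.flatten = (u ++ (List.ofFn cs).map Sum.inl) ++ Sum.inr f :: w := by
    simp [← huw, List.map_ofFn, Function.comp_def]
  obtain ⟨ts, hsub, hts⟩ := exists_isSubexpr_of_flatten_eq hsplit
  have hconst := eq_map_const_of_flatten_suffix (by simp) hts
  rw [List.map_ofFn] at hconst
  rwa [List.ofFn_inj.1 hconst] at hsub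

end Expr

theorem first_base_pattern_is_base_case_general
    (e : Expr C F ar) (he : 1 ≤ e.depth) :
    ∃ (u w : List (C ⊕ F)) (f : F) (cs : Fin (ar f) → C),
      e.flatten = u ++ ((List.ofFn fun i => Sum.inl (cs i)) ++ [Sum.inr f]) ++ w ∧
      (∃ b : Expr C F ar, b.IsSubexpr e ∧ b.IsBase ∧
        b.flatten = (List.ofFn fun i => Sum.inl (cs i)) ++ [Sum.inr f]) ∧
      -- firstness: no function token preceded by arity-many constant tokens occurs earlier
      (∀ (u' w' : List (C ⊕ F)) (g : F) (cs' : Fin (ar g) → C),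
        e.flatten = u' ++ ((List.ofFn fun i => Sum.inl (cs' i)) ++ [Sum.inr g]) ++ w' →
        u.length + ar f ≤ u'.length + ar g) := by
  classical
  obtain ⟨_, ⟨f, cs, rfl⟩, hsub⟩ := e.exists_isBase_isSubexpr he
  have hex : ∃ n, ∃ (u w : List (C ⊕ F)) (f : F) (cs : Fin (ar f) → C),
      e.flatten = u ++ ((List.ofFn fun i => Sum.inl (cs i)) ++ [Sum.inr f]) ++ w ∧
        u.length + ar f = n := by
    obtain ⟨u, w, huw⟩ := Expr.isSubexpr_base_iff_flatten_infix.1 hsub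
    exact ⟨_, u, w, f, cs, by rw [← huw, Expr.flatten_base], rfl⟩
  obtain ⟨u, w, f, cs, heq, hn⟩ := Nat.find_spec hex
  refine ⟨u, w, f, cs, heq, ⟨_, ?_, ⟨f, cs, rfl⟩, Expr.flatten_base f cs⟩,
    fun u' w' g cs' h' => hn ▸ Nat.find_min' hex ⟨u', w', g, cs', h', rfl⟩⟩
  exact Expr.isSubexpr_base_iff_flatten_infix.2 ⟨u, w, by rw [heq, Expr.flatten_base]⟩

theorem first_base_pattern_is_base_case (har : ∀ f, 1 ≤ ar f)
    (e : Expr C F ar) (he : 1 ≤ e.depth) :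
    ∃ (u w : List (C ⊕ F)) (f : F) (cs : Fin (ar f) → C),
      e.flatten = u ++ ((List.ofFn fun i => Sum.inl (cs i)) ++ [Sum.inr f]) ++ w ∧
      (∃ b : Expr C F ar, b.IsSubexpr e ∧ b.IsBase ∧
        b.flatten = (List.ofFn fun i => Sum.inl (cs i)) ++ [Sum.inr f]) ∧
      -- firstness: no function token preceded by arity-many constant tokens occurs earlier
      (∀ (u' w' : List (C ⊕ F)) (g : F) (cs' : Fin (ar g) → C),
        e.flatten = u' ++ ((List.ofFn fun i => Sum.inl (cs' i)) ++ [Sum.inr g]) ++ w' →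
        u.length + ar f ≤ u'.length + ar g) :=
  first_base_pattern_is_base_case_general e he
end

section
/- Replacing a located base-case substring preserves well-formedness and commutes with evaluation: if a well-formed postfix string s contains a base-case substring c₁…c_k f corresponding to a node of its parse tree, then the string s' obtained by replacing that substring with the constant token f(c₁,…,c_k) is also a well-formed postfix expression, and eval(s') = eval(s). -/
variable {C F : Type} {ar : F → ℕ}

/-!
Every occurrence of a function symbol `f` in the flattening of a tree is the last token of a node
`f(t₁, …, t_k)`, immediately preceded by the flattenings of `t₁, …, t_k`, and that node can be
swapped for any tree of the same value. If the `k` tokens before `f` are constants, reading from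
the right shows that each `tᵢ` is a constant (a tree whose flattening ends in a constant is that
constant), so the node is exactly the base case, and we swap it for the constant `f(c₁, …, c_k)`.
-/

namespace List

variable {α : Type*}

theorem exists_block_of_flatten_eq_append_cons {L : List (List α)} {v w : List α} {x : α}
    (h : L.flatten = v ++ x :: w) :
    ∃ L₁ l₁ l₂ L₂, L = L₁ ++ (l₁ ++ x :: l₂) :: L₂ ∧ v = L₁.flatten ++ l₁ ∧
      w = l₂ ++ L₂.flatten := by
  rcases flatten_eq_append_iff.mp h with
    ⟨L₁, L₂, rfl, rfl, hL₂⟩ | ⟨L₁, l₁, c, l₂, L₂, rfl, rfl, hw⟩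
  · obtain ⟨L₀, l₂, L₂', rfl, hnil, rfl⟩ := flatten_eq_cons_iff.mp hL₂.symm
    exact ⟨L₁ ++ L₀, [], l₂, L₂', by simp, by simp [flatten_eq_nil_iff.mpr hnil], rfl⟩
  · obtain ⟨rfl, rfl⟩ := cons_eq_cons.mp hw
    exact ⟨L₁, l₁, l₂, L₂, rfl, rfl, rfl⟩

theorem ofFn_update {n : ℕ} (g : Fin n → α) (j : Fin n) (a : α) :
    ofFn (Function.update g j a) = (ofFn g).set j a := by
  refine ext_getElem (by simp) fun i _ _ => ?_
  simp only [List.getElem_ofFn, getElem_set, Function.update_apply, Fin.ext_iff, eq_comm]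

theorem exists_update_of_flatten_ofFn_eq_append_cons {n : ℕ} {g : Fin n → List α}
    {v w : List α} {x : α} (h : (ofFn g).flatten = v ++ x :: w) :
    ∃ j l₁ l₂ P S, g j = l₁ ++ x :: l₂ ∧ v = P ++ l₁ ∧ w = l₂ ++ S ∧
      ∀ a, (ofFn (Function.update g j a)).flatten = P ++ a ++ S := by
  obtain ⟨L₁, l₁, l₂, L₂, hL, rfl, rfl⟩ := exists_block_of_flatten_eq_append_cons h
  have hj : L₁.length < n := by have := congrArg length hL; simp at this; omega
  refine ⟨⟨L₁.length, hj⟩, l₁, l₂, L₁.flatten, L₂.flatten, ?_, by simp, rfl, fun a => ?_⟩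
  · simpa [hL] using (List.getElem_ofFn (f := g) (i := L₁.length) (by simpa using hj)).symm
  · simp [ofFn_update, hL]

end List

namespace Expr

theorem flatten_ne_nil (e : Expr C F ar) : e.flatten ≠ [] := by
  cases e <;> simp [flatten]

theorem eq_const_of_getLast?_flatten {e : Expr C F ar} {c : C}
    (h : e.flatten.getLast? = some (.inl c)) : e = const c := by
  cases e <;> simp_all [flatten]

theorem eq_const_of_append_flatten_eq_append_ofFn_inl {n : ℕ} {ts : Fin n → Expr C F ar}
    {cs : Fin n → C} {v u : List (C ⊕ F)}
    (h : v ++ (List.ofFn fun i => (ts i).flatten).flatten = u ++ List.ofFn fun i => .inl (cs i)) :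
    v = u ∧ ts = fun i => const (cs i) := by
  induction n generalizing v u with
  | zero => simpa [List.ofFn_zero, funext_iff] using h
  | succ n ih =>
    rw [List.ofFn_succ_last, List.ofFn_succ_last] at h
    have hlast : ts (Fin.last n) = const (cs (Fin.last n)) :=
      eq_const_of_getLast?_flatten <| by
        simpa [flatten_ne_nil] using congrArg List.getLast? h
    simp only [hlast, flatten, List.flatten_append, List.flatten_cons, List.flatten_nil,
      List.append_nil, ← List.append_assoc, List.append_cancel_right_eq] at h
    obtain ⟨rfl, hinit⟩ := ih h
    exact ⟨rfl, funext (Fin.lastCases hlast (congrFun hinit))⟩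

theorem exists_replace_node_of_flatten_eq_append_inr (interp : ∀ f, (Fin (ar f) → C) → C)
    (e : Expr C F ar) {v w : List (C ⊕ F)} {f : F} (h : e.flatten = v ++ .inr f :: w) :
    ∃ (ts : Fin (ar f) → Expr C F ar) (v₀ : List (C ⊕ F)),
      v = v₀ ++ (List.ofFn fun i => (ts i).flatten).flatten ∧
      ∀ d : Expr C F ar, d.eval interp = (node f ts).eval interp →
        ∃ e' : Expr C F ar, e'.flatten = v₀ ++ d.flatten ++ w ∧ e'.eval interp = e.eval interp := by
  induction e generalizing v w with
  | const c => simpa [flatten] using congrArg (Sum.inr f ∈ ·) h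
  | node g ts ih =>
    rcases List.eq_nil_or_concat w with rfl | ⟨w, z, rfl⟩
    · obtain ⟨rfl, hgf⟩ := List.append_inj' h rfl
      obtain rfl : g = f := by simpa using hgf
      exact ⟨ts, [], rfl, fun d hd => ⟨d, by simp, hd⟩⟩
    have h' : (List.ofFn fun i => (ts i).flatten).flatten ++ [.inr g] =
        (v ++ .inr f :: w) ++ [z] := by
      simpa [flatten] using h
    obtain ⟨hchildren, hz⟩ := List.append_inj' h' rfl
    obtain rfl : z = .inr g := by simpa using hz.symm
    obtain ⟨j, l₁, l₂, P, S, hj, rfl, rfl, hupdate⟩ :=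
      List.exists_update_of_flatten_ofFn_eq_append_cons hchildren
    obtain ⟨ts', v₀, rfl, hreplace⟩ := ih j hj
    refine ⟨ts', P ++ v₀, by simp, fun d hd => ?_⟩
    obtain ⟨t', ht', heval⟩ := hreplace d hd
    refine ⟨node g (Function.update ts j t'), ?_, ?_⟩
    · simp [flatten, Function.apply_update (fun _ => flatten), hupdate, ht']
    · simp [eval, Function.apply_update (fun _ => eval interp), heval]

end Expr

theorem replace_base_case_preserves_general (interp : ∀ f, (Fin (ar f) → C) → C)
    (e : Expr C F ar) (u w : List (C ⊕ F)) (f : F) (cs : Fin (ar f) → C)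
    (hsplit : e.flatten = u ++ ((List.ofFn fun i => Sum.inl (cs i)) ++ [Sum.inr f]) ++ w) :
    ∃ e' : Expr C F ar,
      e'.flatten = u ++ [Sum.inl (interp f cs)] ++ w ∧
      e'.eval interp = e.eval interp := by
  obtain ⟨ts, v₀, hv, hreplace⟩ :=
    e.exists_replace_node_of_flatten_eq_append_inr interp (v := u ++ _) (by simpa using hsplit)
  obtain ⟨rfl, rfl⟩ := Expr.eq_const_of_append_flatten_eq_append_ofFn_inl hv.symm
  obtain ⟨e', he', heval⟩ := hreplace (.const (interp f cs)) rfl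
  exact ⟨e', by simpa [Expr.flatten] using he', heval⟩

theorem replace_base_case_preserves (interp : ∀ f, (Fin (ar f) → C) → C)
    (e : Expr C F ar) (u w : List (C ⊕ F)) (f : F) (cs : Fin (ar f) → C)
    (hsplit : e.flatten = u ++ ((List.ofFn fun i => Sum.inl (cs i)) ++ [Sum.inr f]) ++ w)
    (hnode : ∃ b : Expr C F ar, b.IsSubexpr e ∧ b.IsBase ∧
      b.flatten = (List.ofFn fun i => Sum.inl (cs i)) ++ [Sum.inr f]) :
    ∃ e' : Expr C F ar,
      e'.flatten = u ++ [Sum.inl (interp f cs)] ++ w ∧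
      e'.eval interp = e.eval interp :=
  replace_base_case_preserves_general interp e u w f cs hsplit
end
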